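/- Let 0 < p < 1, q = 1 − p. Fix integers n₁, n₂ ≥ 1, x₁, x₂ ∈ ℤ, t₁ ≥ 0, t₂ ∈ ℤ, let π₂ ∈ {1, p}, and fix radii ρ, R with 0 < ρ < 1, R > 1 + ρ and Rρ < (R−1)(1−ρ). Define Ψ^{n}_{k}(x,t) = (2πi)^{−1} ∮_{|w|=R} (q + p/w)^{t} ((w−1)/w)^{k} w^{x+n−2} dw and Φ^{n}_{j}(x,t) = (2πi)^{−1} ∮_{|v−1|=ρ} (q + p/v)^{−t} (v−1)^{−j−1} v^{j−x−n} / ((1/π₂ − 1)v + 1) dv. Then the series ∑_{k=1}^{∞} Ψ^{n₁}_{n₁−k}(x₁,t₁) · Φ^{n₂}_{n₂−k}(x₂,t₂) converges, and its sum equals the double contour integral (2πi)^{−2} ∮_{|v−1|=ρ} (dv/v) ∮_{|w|=R} (dw/w) (q + p/w)^{t₁} (q + p/v)^{−t₂} (w−1)^{n₁} (v−1)^{−n₂} w^{x₁} v^{−x₂} / ( (w − v) (1/v + 1/π₂ − 1) ). -/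

import Mathlib

open Complex

/-- `Ψ^n_k(x,t)`: contour integral over the circle `|w| = R`. -/
noncomputable def Psi2 (p R : ℝ) (n k x t : ℤ) : ℂ :=
  (2 * Real.pi * Complex.I)⁻¹ *
    ∮ w in C(0, R), ((1 - p : ℂ) + p / w) ^ t * ((w - 1) / w) ^ k * w ^ (x + n - 2)

/-- `Φ^n_j(x,t)`: contour integral over the circle `|v − 1| = ρ`. -/
noncomputable def Phi2 (p ρ π₂ : ℝ) (n j x t : ℤ) : ℂ :=
  (2 * Real.pi * Complex.I)⁻¹ *
    ∮ v in C(1, ρ),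
      ((1 - p : ℂ) + p / v) ^ (-t) * (v - 1) ^ (-j - 1) * v ^ (j - x - n) /
        (((1 / π₂ - 1 : ℝ) : ℂ) * v + 1)

/-!
Writing `r = ((v - 1) / v) / ((w - 1) / w)`, the `k`-th term of the series is the double integral
of `r ^ k` times the `k = 0` integrand, and on the two circles `‖r‖ ≤ Rρ / ((R - 1)(1 - ρ)) < 1`.
Summing the geometric series under both integrals (dominated convergence, the integrands being
bounded on the compact circles) produces the factor `1 / (1 - r) = (w - 1) v / (w - v)`, which
turns the product of the two integrands into the double-integral kernel.
-/

open Metric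

theorem hasSum_circleIntegral_of_norm_le {E : Type*} [NormedAddCommGroup E] [NormedSpace ℂ E]
    [CompleteSpace E] {f : ℕ → ℂ → E} {g : ℂ → E} {c : ℂ} {R : ℝ} {bound : ℕ → ℝ}
    (hf : ∀ k, CircleIntegrable (f k) c R)
    (hbound : ∀ k, ∀ z ∈ sphere c |R|, ‖f k z‖ ≤ bound k) (hsum : Summable bound)
    (hg : ∀ z ∈ sphere c |R|, HasSum (fun k => f k z) (g z)) :
    HasSum (fun k => ∮ z in C(c, R), f k z) (∮ z in C(c, R), g z) := by
  refine intervalIntegral.hasSum_integral_of_dominated_convergence (fun k _ => |R| * bound k)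
    (fun k => (hf k).out.def'.aestronglyMeasurable) (fun k => ?_)
    (.of_forall fun _ _ => hsum.mul_left _) intervalIntegrable_const
    (.of_forall fun θ _ => (hg _ (circleMap_mem_sphere' c R θ)).const_smul _)
  refine .of_forall fun θ _ => ?_
  simp only [norm_smul, deriv_circleMap, norm_mul, norm_circleMap_zero, Complex.norm_I, mul_one]
  exact mul_le_mul_of_nonneg_left (hbound k _ (circleMap_mem_sphere' c R θ)) (abs_nonneg R)

theorem hasSum_circleIntegral_mul_circleIntegral {φ ψ : ℕ → ℂ → ℂ} {G : ℂ → ℂ → ℂ}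
    {c₁ c₂ : ℂ} {R₁ R₂ : ℝ} {bound : ℕ → ℝ}
    (hφ : ∀ k, CircleIntegrable (φ k) c₁ R₁) (hψ : ∀ k, CircleIntegrable (ψ k) c₂ R₂)
    (hbound : ∀ k, ∀ v ∈ sphere c₁ |R₁|, ∀ w ∈ sphere c₂ |R₂|, ‖φ k v * ψ k w‖ ≤ bound k)
    (hsum : Summable bound)
    (hG : ∀ v ∈ sphere c₁ |R₁|, ∀ w ∈ sphere c₂ |R₂|, HasSum (fun k => φ k v * ψ k w) (G v w)) :
    HasSum (fun k => (∮ v in C(c₁, R₁), φ k v) * ∮ w in C(c₂, R₂), ψ k w)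
      (∮ v in C(c₁, R₁), ∮ w in C(c₂, R₂), G v w) := by
  have inner (v) (hv : v ∈ sphere c₁ |R₁|) :
      HasSum (fun k => φ k v * ∮ w in C(c₂, R₂), ψ k w) (∮ w in C(c₂, R₂), G v w) := by
    simpa only [circleIntegral.integral_const_mul] using
      hasSum_circleIntegral_of_norm_le (f := fun k w => φ k v * ψ k w)
        (fun k => (hψ k).const_smul (a := φ k v)) (hbound · v hv) hsum (hG v hv)
  simpa only [← smul_eq_mul, circleIntegral.integral_smul_const] using
    hasSum_circleIntegral_of_norm_le (f := fun k v => φ k v * ∮ w in C(c₂, R₂), ψ k w)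
      (fun k => (hφ k).mul_continuousOn continuousOn_const)
      (fun k v hv => by
        rw [← circleIntegral.integral_const_mul]
        exact circleIntegral.norm_integral_le_of_norm_le_const' (hbound k v hv))
      (hsum.mul_left _) inner

noncomputable def psiIntegrand (p : ℝ) (n k x t : ℤ) (w : ℂ) : ℂ :=
  ((1 - p : ℂ) + p / w) ^ t * ((w - 1) / w) ^ k * w ^ (x + n - 2)

noncomputable def phiIntegrand (p π₂ : ℝ) (n j x t : ℤ) (v : ℂ) : ℂ :=
  ((1 - p : ℂ) + p / v) ^ (-t) * (v - 1) ^ (-j - 1) * v ^ (j - x - n) /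
    (((1 / π₂ - 1 : ℝ) : ℂ) * v + 1)

noncomputable def kernelIntegrand (p π₂ : ℝ) (n₁ n₂ x₁ x₂ t₁ t₂ : ℤ) (v w : ℂ) : ℂ :=
  ((1 - p : ℂ) + p / w) ^ t₁ * ((1 - p : ℂ) + p / v) ^ (-t₂) *
    (w - 1) ^ n₁ * (v - 1) ^ (-n₂) * w ^ x₁ * v ^ (-x₂) /
      ((w - v) * (1 / v + 1 / (π₂ : ℂ) - 1))

section Integrands

variable {p π₂ : ℝ} {n x t : ℤ} {v w : ℂ}

theorem psiIntegrand_sub_natCast (hw0 : w ≠ 0) (hw1 : w ≠ 1) (k : ℤ) (m : ℕ) :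
    psiIntegrand p n (k - m) x t w = psiIntegrand p n k x t w * (((w - 1) / w) ^ m)⁻¹ := by
  have : (w - 1) / w ≠ 0 := div_ne_zero (sub_ne_zero.2 hw1) hw0
  simp only [psiIntegrand, zpow_sub₀ this, zpow_natCast]
  ring

theorem phiIntegrand_sub_natCast (hv0 : v ≠ 0) (hv1 : v ≠ 1) (j : ℤ) (m : ℕ) :
    phiIntegrand p π₂ n (j - m) x t v = phiIntegrand p π₂ n j x t v * ((v - 1) / v) ^ m := by
  have e1 : -(j - m) - 1 = (-j - 1) + m := by ring
  have e2 : j - m - x - n = (j - x - n) - m := by ring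
  simp only [phiIntegrand, e1, e2, zpow_add₀ (sub_ne_zero.2 hv1), zpow_sub₀ hv0, zpow_natCast,
    div_pow]
  ring

theorem continuousAt_psiIntegrand (ht : 0 ≤ t) (hw0 : w ≠ 0) (hw1 : w ≠ 1) (k : ℤ) :
    ContinuousAt (psiIntegrand p n k x t) w := by
  have : (w - 1) / w ≠ 0 := div_ne_zero (sub_ne_zero.2 hw1) hw0
  unfold psiIntegrand
  fun_prop (disch := simp_all)

theorem continuousAt_phiIntegrand (hv0 : v ≠ 0) (hv1 : v ≠ 1)
    (hq : (1 - p : ℂ) + p / v ≠ 0) (hD : ((1 / π₂ - 1 : ℝ) : ℂ) * v + 1 ≠ 0) (j : ℤ) :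
    ContinuousAt (phiIntegrand p π₂ n j x t) v := by
  have : v - 1 ≠ 0 := sub_ne_zero.2 hv1
  unfold phiIntegrand
  fun_prop (disch := simp_all)

theorem one_sub_mul_add_ne_zero (hp0 : 0 ≤ p) (hp1 : p ≤ 1) (hv : ‖v - 1‖ < 1) :
    (1 - p : ℂ) * v + p ≠ 0 := by
  intro h
  have h' : ((1 - p : ℝ) : ℂ) * (v - 1) = -1 := by push_cast; linear_combination h
  have := congrArg norm h'
  rw [norm_mul, Complex.norm_real, Real.norm_of_nonneg (by linarith), norm_neg, norm_one] at this
  nlinarith [norm_nonneg (v - 1)]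

theorem one_sub_add_div_ne_zero (hp0 : 0 ≤ p) (hp1 : p ≤ 1) (hv : ‖v - 1‖ < 1) :
    (1 - p : ℂ) + p / v ≠ 0 := by
  have hv0 : v ≠ 0 := by rintro rfl; simp at hv
  rw [← mul_div_cancel_right₀ (1 - p : ℂ) hv0, ← add_div]
  exact div_ne_zero (one_sub_mul_add_ne_zero hp0 hp1 hv) hv0

theorem inv_sub_one_mul_add_one_ne_zero (hp0 : 0 < p) (hp1 : p ≤ 1) (hπ₂ : π₂ = 1 ∨ π₂ = p)
    (hv : ‖v - 1‖ < 1) : ((1 / π₂ - 1 : ℝ) : ℂ) * v + 1 ≠ 0 := by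
  rcases hπ₂ with rfl | rfl
  · norm_num
  · have hp : (π₂ : ℂ) ≠ 0 := by exact_mod_cast hp0.ne'
    have : ((1 / π₂ - 1 : ℝ) : ℂ) * v + 1 = ((1 - π₂ : ℂ) * v + π₂) / π₂ := by
      push_cast; field_simp
    rw [this]
    exact div_ne_zero (one_sub_mul_add_ne_zero hp0.le hp1 hv) hp

end Integrands

section Series

variable (p π₂ : ℝ) (n₁ n₂ x₁ x₂ t₁ t₂ : ℤ) {v w : ℂ}

theorem phiIntegrand_mul_psiIntegrand_eq_mul_pow (hw0 : w ≠ 0) (hw1 : w ≠ 1) (hv0 : v ≠ 0)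
    (hv1 : v ≠ 1) (k : ℕ) :
    phiIntegrand p π₂ n₂ (n₂ - (k + 1)) x₂ t₂ v * psiIntegrand p n₁ (n₁ - (k + 1)) x₁ t₁ w =
      phiIntegrand p π₂ n₂ (n₂ - 1) x₂ t₂ v * psiIntegrand p n₁ (n₁ - 1) x₁ t₁ w *
        ((v - 1) / v / ((w - 1) / w)) ^ k := by
  rw [sub_add_eq_sub_sub_swap, sub_add_eq_sub_sub_swap, phiIntegrand_sub_natCast hv0 hv1,
    psiIntegrand_sub_natCast hw0 hw1, div_pow ((v - 1) / v) ((w - 1) / w) k]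
  ring

theorem phiIntegrand_mul_psiIntegrand_div_one_sub (hw0 : w ≠ 0) (hw1 : w ≠ 1) (hv0 : v ≠ 0)
    (hwv : w ≠ v) :
    phiIntegrand p π₂ n₂ (n₂ - 1) x₂ t₂ v * psiIntegrand p n₁ (n₁ - 1) x₁ t₁ w /
        (1 - (v - 1) / v / ((w - 1) / w)) =
      v⁻¹ * (w⁻¹ * kernelIntegrand p π₂ n₁ n₂ x₁ x₂ t₁ t₂ v w) := by
  have hw1' : w - 1 ≠ 0 := sub_ne_zero.2 hw1
  have hwv' : w - v ≠ 0 := sub_ne_zero.2 hwv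
  have hD : ((1 / π₂ - 1 : ℝ) : ℂ) * v + 1 = v * (1 / v + 1 / (π₂ : ℂ) - 1) := by
    push_cast; field_simp; ring
  have h1 : 1 - (v - 1) / v / ((w - 1) / w) = (w - v) / (v * (w - 1)) := by
    field_simp; ring
  have e1 : -(n₂ - 1) - 1 = -n₂ := by ring
  have e2 : n₂ - 1 - x₂ - n₂ = -x₂ - 1 := by ring
  have e3 : x₁ + n₁ - 2 = x₁ + (n₁ - 1) - 1 := by ring
  simp only [phiIntegrand, psiIntegrand, kernelIntegrand, hD, h1, e1, e2, e3, div_zpow,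
    zpow_add₀ hw0, zpow_sub_one₀ hw0, zpow_sub_one₀ hv0, zpow_sub_one₀ hw1']
  field_simp

theorem hasSum_phiIntegrand_mul_psiIntegrand (hw0 : w ≠ 0) (hw1 : w ≠ 1) (hv0 : v ≠ 0)
    (hv1 : v ≠ 1) (hwv : w ≠ v) (hr : ‖(v - 1) / v / ((w - 1) / w)‖ < 1) :
    HasSum (fun k : ℕ =>
        phiIntegrand p π₂ n₂ (n₂ - (k + 1)) x₂ t₂ v * psiIntegrand p n₁ (n₁ - (k + 1)) x₁ t₁ w)
      (v⁻¹ * (w⁻¹ * kernelIntegrand p π₂ n₁ n₂ x₁ x₂ t₁ t₂ v w)) := by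
  rw [← phiIntegrand_mul_psiIntegrand_div_one_sub p π₂ n₁ n₂ x₁ x₂ t₁ t₂ hw0 hw1 hv0 hwv,
    div_eq_mul_inv]
  simp only [phiIntegrand_mul_psiIntegrand_eq_mul_pow p π₂ n₁ n₂ x₁ x₂ t₁ t₂ hw0 hw1 hv0 hv1]
  exact (hasSum_geometric_of_norm_lt_one hr).mul_left _

end Series

section Contours

variable {ρ R : ℝ} {v w : ℂ}

theorem sub_one_le_norm_sub_one (hw : w ∈ sphere 0 R) : R - 1 ≤ ‖w - 1‖ := by
  simpa [mem_sphere_zero_iff_norm.1 hw] using norm_sub_norm_le w 1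

theorem one_sub_le_norm (hv : v ∈ sphere 1 ρ) : 1 - ρ ≤ ‖v‖ := by
  have := norm_sub_norm_le (1 : ℂ) v
  rw [norm_one, norm_sub_rev, mem_sphere_iff_norm.1 hv] at this
  linarith

theorem norm_le_one_add (hv : v ∈ sphere 1 ρ) : ‖v‖ ≤ 1 + ρ := by
  simpa [← mem_sphere_iff_norm.1 hv, add_comm] using norm_le_norm_add_norm_sub' v 1

theorem ne_zero_of_mem_sphere_one (hv : v ∈ sphere 1 ρ) (hρ1 : ρ < 1) : v ≠ 0 := by
  rintro rfl
  simp at hv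
  linarith

theorem ne_one_of_mem_sphere_zero (hw : w ∈ sphere 0 R) (hR : 1 < R) : w ≠ 1 := by
  rintro rfl
  simp at hw
  linarith

theorem ne_of_mem_sphere_zero_of_mem_sphere_one (hw : w ∈ sphere 0 R) (hv : v ∈ sphere 1 ρ)
    (hR : 1 + ρ < R) : w ≠ v := by
  rintro rfl
  have := norm_le_one_add hv
  rw [mem_sphere_zero_iff_norm.1 hw] at this
  linarith

theorem norm_div_div_le_of_mem_sphere (hw : w ∈ sphere 0 R) (hv : v ∈ sphere 1 ρ) (hρ1 : ρ < 1)
    (hR : 1 < R) :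
    ‖(v - 1) / v / ((w - 1) / w)‖ ≤ R * ρ / ((R - 1) * (1 - ρ)) := by
  rw [norm_div, norm_div, norm_div, mem_sphere_iff_norm.1 hv, ← sub_zero w,
    mem_sphere_iff_norm.1 hw, sub_zero]
  have hρ0 : 0 ≤ ρ := nonneg_of_mem_sphere hv
  calc ρ / ‖v‖ / (‖w - 1‖ / R) ≤ ρ / (1 - ρ) / ((R - 1) / R) := by
        gcongr
        · exact one_sub_le_norm hv
        · exact sub_one_le_norm_sub_one hw
    _ = R * ρ / ((R - 1) * (1 - ρ)) := by field_simp

variable {p π₂ : ℝ} {n x t : ℤ}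

theorem continuousOn_psiIntegrand_sphere (ht : 0 ≤ t) (hR : 1 < R) (k : ℤ) :
    ContinuousOn (psiIntegrand p n k x t) (sphere 0 R) := fun _ hw =>
  (continuousAt_psiIntegrand ht (ne_of_mem_sphere hw (by linarith))
    (ne_one_of_mem_sphere_zero hw hR) k).continuousWithinAt

theorem continuousOn_phiIntegrand_sphere (hp0 : 0 < p) (hp1 : p ≤ 1) (hπ₂ : π₂ = 1 ∨ π₂ = p)
    (hρ0 : 0 < ρ) (hρ1 : ρ < 1) (j : ℤ) :
    ContinuousOn (phiIntegrand p π₂ n j x t) (sphere 1 ρ) := fun v hv =>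
  have hv1 : ‖v - 1‖ < 1 := (mem_sphere_iff_norm.1 hv).trans_lt hρ1
  (continuousAt_phiIntegrand (ne_zero_of_mem_sphere_one hv hρ1) (ne_of_mem_sphere hv hρ0.ne')
    (one_sub_add_div_ne_zero hp0.le hp1 hv1) (inv_sub_one_mul_add_one_ne_zero hp0 hp1 hπ₂ hv1)
    j).continuousWithinAt

end Contours

theorem hasSum_circleIntegral_phiIntegrand_mul_psiIntegrand {p π₂ ρ R : ℝ}
    (n₁ n₂ x₁ x₂ t₁ t₂ : ℤ) (hp0 : 0 < p) (hp1 : p < 1) (hπ₂ : π₂ = 1 ∨ π₂ = p) (ht₁ : 0 ≤ t₁)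
    (hρ0 : 0 < ρ) (hρ1 : ρ < 1) (hR : 1 + ρ < R) (hRρ : R * ρ < (R - 1) * (1 - ρ)) :
    HasSum (fun k : ℕ => (∮ v in C(1, ρ), phiIntegrand p π₂ n₂ (n₂ - (k + 1)) x₂ t₂ v) *
        ∮ w in C(0, R), psiIntegrand p n₁ (n₁ - (k + 1)) x₁ t₁ w)
      (∮ v in C(1, ρ), ∮ w in C(0, R),
        v⁻¹ * (w⁻¹ * kernelIntegrand p π₂ n₁ n₂ x₁ x₂ t₁ t₂ v w)) := by
  have hR0 : 0 < R := by linarith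
  have hR1 : 1 < R := by linarith
  have hne {v w : ℂ} (hv : v ∈ sphere 1 ρ) (hw : w ∈ sphere 0 R) :
      w ≠ 0 ∧ w ≠ 1 ∧ v ≠ 0 ∧ v ≠ 1 :=
    ⟨ne_of_mem_sphere hw hR0.ne', ne_one_of_mem_sphere_zero hw hR1,
      ne_zero_of_mem_sphere_one hv hρ1, ne_of_mem_sphere hv hρ0.ne'⟩
  have hφ := continuousOn_phiIntegrand_sphere (n := n₂) (x := x₂) (t := t₂)
    hp0 hp1.le hπ₂ hρ0 hρ1
  have hψ := continuousOn_psiIntegrand_sphere (p := p) (n := n₁) (x := x₁) ht₁ hR1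
  obtain ⟨Cφ, hCφ0, hCφ⟩ :=
    ((isCompact_sphere _ _).image_of_continuousOn (hφ (n₂ - 1))).isBounded.exists_pos_norm_le
  obtain ⟨Cψ, hCψ0, hCψ⟩ :=
    ((isCompact_sphere _ _).image_of_continuousOn (hψ (n₁ - 1))).isBounded.exists_pos_norm_le
  set c := R * ρ / ((R - 1) * (1 - ρ))
  have hc : c < 1 := (div_lt_one (by nlinarith)).2 hRρ
  refine hasSum_circleIntegral_mul_circleIntegral
    (φ := fun k : ℕ => phiIntegrand p π₂ n₂ (n₂ - (k + 1)) x₂ t₂)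
    (ψ := fun k : ℕ => psiIntegrand p n₁ (n₁ - (k + 1)) x₁ t₁)
    (G := fun v w => v⁻¹ * (w⁻¹ * kernelIntegrand p π₂ n₁ n₂ x₁ x₂ t₁ t₂ v w))
    (bound := fun k => Cφ * Cψ * c ^ k)
    (fun k => (hφ _).circleIntegrable hρ0.le) (fun k => (hψ _).circleIntegrable hR0.le) ?_
    ((summable_geometric_of_lt_one (by positivity) hc).mul_left _) ?_
  all_goals simp only [abs_of_pos hρ0, abs_of_pos hR0]
  · intro k v hv w hw
    obtain ⟨hw0, hw1, hv0, hv1⟩ := hne hv hw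
    rw [phiIntegrand_mul_psiIntegrand_eq_mul_pow p π₂ n₁ n₂ x₁ x₂ t₁ t₂ hw0 hw1 hv0 hv1, norm_mul,
      norm_mul, norm_pow]
    gcongr
    · exact hCφ _ (Set.mem_image_of_mem _ hv)
    · exact hCψ _ (Set.mem_image_of_mem _ hw)
    · exact norm_div_div_le_of_mem_sphere hw hv hρ1 hR1
  · intro v hv w hw
    obtain ⟨hw0, hw1, hv0, hv1⟩ := hne hv hw
    exact hasSum_phiIntegrand_mul_psiIntegrand p π₂ n₁ n₂ x₁ x₂ t₁ t₂ hw0 hw1 hv0 hv1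
      (ne_of_mem_sphere_zero_of_mem_sphere_one hw hv hR)
      ((norm_div_div_le_of_mem_sphere hw hv hρ1 hR1).trans_lt hc)

theorem kernel_double_integral_general (p : ℝ) (hp0 : 0 < p) (hp1 : p < 1)
    (n₁ n₂ : ℤ)
    (x₁ x₂ t₁ t₂ : ℤ) (ht₁ : 0 ≤ t₁)
    (π₂ : ℝ) (hπ₂ : π₂ = 1 ∨ π₂ = p)
    (ρ R : ℝ) (hρ0 : 0 < ρ) (hρ1 : ρ < 1) (hR : 1 + ρ < R)
    (hRρ : R * ρ < (R - 1) * (1 - ρ)) :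
    HasSum
      (fun k : ℕ =>
        Psi2 p R n₁ (n₁ - (k + 1)) x₁ t₁ * Phi2 p ρ π₂ n₂ (n₂ - (k + 1)) x₂ t₂)
      (((2 * Real.pi * Complex.I) ^ 2)⁻¹ *
        ∮ v in C(1, ρ), v⁻¹ *
          ∮ w in C(0, R), w⁻¹ *
            (((1 - p : ℂ) + p / w) ^ t₁ * ((1 - p : ℂ) + p / v) ^ (-t₂) *
                (w - 1) ^ n₁ * (v - 1) ^ (-n₂) * w ^ x₁ * v ^ (-x₂) /
              ((w - v) * (1 / v + 1 / (π₂ : ℂ) - 1)))) := by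
  have hterm (k : ℕ) :
      Psi2 p R n₁ (n₁ - (k + 1)) x₁ t₁ * Phi2 p ρ π₂ n₂ (n₂ - (k + 1)) x₂ t₂ =
        ((2 * Real.pi * I) ^ 2)⁻¹ *
          ((∮ v in C(1, ρ), phiIntegrand p π₂ n₂ (n₂ - (k + 1)) x₂ t₂ v) *
            ∮ w in C(0, R), psiIntegrand p n₁ (n₁ - (k + 1)) x₁ t₁ w) := by
    simp only [Psi2, Phi2, psiIntegrand, phiIntegrand]
    ring
  simp only [hterm]
  simpa only [circleIntegral.integral_const_mul, kernelIntegrand] using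
    (hasSum_circleIntegral_phiIntegrand_mul_psiIntegrand n₁ n₂ x₁ x₂ t₁ t₂
      hp0 hp1 hπ₂ ht₁ hρ0 hρ1 hR hRρ).mul_left ((2 * Real.pi * I) ^ 2)⁻¹

/-- the series `∑_{k=1}^{∞} Ψ^{n₁}_{n₁−k}(x₁,t₁)·Φ^{n₂}_{n₂−k}(x₂,t₂)`
converges and its sum equals the double contour integral part of the kernel. -/
theorem kernel_double_integral (p : ℝ) (hp0 : 0 < p) (hp1 : p < 1)
    (n₁ n₂ : ℤ) (hn₁ : 1 ≤ n₁) (hn₂ : 1 ≤ n₂)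
    (x₁ x₂ t₁ t₂ : ℤ) (ht₁ : 0 ≤ t₁)
    (π₂ : ℝ) (hπ₂ : π₂ = 1 ∨ π₂ = p)
    (ρ R : ℝ) (hρ0 : 0 < ρ) (hρ1 : ρ < 1) (hR : 1 + ρ < R)
    (hRρ : R * ρ < (R - 1) * (1 - ρ)) :
    HasSum
      (fun k : ℕ =>
        Psi2 p R n₁ (n₁ - (k + 1)) x₁ t₁ * Phi2 p ρ π₂ n₂ (n₂ - (k + 1)) x₂ t₂)
      (((2 * Real.pi * Complex.I) ^ 2)⁻¹ *
        ∮ v in C(1, ρ), v⁻¹ *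
          ∮ w in C(0, R), w⁻¹ *
            (((1 - p : ℂ) + p / w) ^ t₁ * ((1 - p : ℂ) + p / v) ^ (-t₂) *
                (w - 1) ^ n₁ * (v - 1) ^ (-n₂) * w ^ x₁ * v ^ (-x₂) /
              ((w - v) * (1 / v + 1 / (π₂ : ℂ) - 1)))) :=
  kernel_double_integral_general p hp0 hp1 n₁ n₂ x₁ x₂ t₁ t₂ ht₁ π₂ hπ₂ ρ R hρ0 hρ1 hR hRρ
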